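/- arXiv:1506.04216 — 2 statements merged into one kernel-verified Lean document; each statement's English description precedes it below -/
import Mathlib

section
/- (Intermediate bound in the proof of Lemma 2) Let each f_{n,i} be differentiable, convex, with L-Lipschitz gradient. For any x ∈ ℝ^{Np} and table y, (1/∏_n q_n) Σ_i ‖ĝ(i) − ∇f(x*)‖² ≤ 4 L p(y) − ‖∇f(x) − ∇f(x*)‖² + 4L [f(x) − f(x*) − ⟨∇f(x*), x − x*⟩]. -/
open Finset
open scoped RealInnerProductSpace

noncomputable section

/-- Block vectors of `ℝ^{Np}`: one vector of `ℝᵖ` per node. -/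
abbrev Evec (p : ℕ) := EuclideanSpace ℝ (Fin p)

/-- The local objective of node `n`: `f_n(w) = (1/q_n) ∑_i f_{n,i}(w)`. -/
def locf {N p : ℕ} {q : Fin N → ℕ}
    (f : (n : Fin N) → Fin (q n) → Evec p → ℝ) (n : Fin N) (w : Evec p) : ℝ :=
  (q n : ℝ)⁻¹ * ∑ i, f n i w

/-- The local stochastic averaging gradient of node `n` for index choice `j`:
`ĝ_n(j) = ∇f_{n,j}(x_n) − ∇f_{n,j}(y_{n,j}) + (1/q_n) ∑_i ∇f_{n,i}(y_{n,i})`. -/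
def hatg {N p : ℕ} {q : Fin N → ℕ}
    (f : (n : Fin N) → Fin (q n) → Evec p → ℝ)
    (x : Fin N → Evec p)
    (y : (n : Fin N) → Fin (q n) → Evec p)
    (n : Fin N) (j : Fin (q n)) : Evec p :=
  gradient (f n j) (x n) - gradient (f n j) (y n j)
    + (q n : ℝ)⁻¹ • ∑ i, gradient (f n i) (y n i)

/-- `p(y) = ∑_n (1/q_n) ∑_i [f_{n,i}(y_{n,i}) − f_{n,i}(x̃*) − ⟨∇f_{n,i}(x̃*), y_{n,i} − x̃*⟩]`. -/
def ptbl {N p : ℕ} {q : Fin N → ℕ}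
    (f : (n : Fin N) → Fin (q n) → Evec p → ℝ)
    (xstar : Evec p)
    (y : (n : Fin N) → Fin (q n) → Evec p) : ℝ :=
  ∑ n, (q n : ℝ)⁻¹ * ∑ i,
    (f n i (y n i) - f n i xstar - ⟪gradient (f n i) xstar, y n i - xstar⟫)

/-- The aggregate optimality gap `f(x) − f(x*) − ⟨∇f(x*), x − x*⟩`, written blockwise. -/
def optgap {N p : ℕ} {q : Fin N → ℕ}
    (f : (n : Fin N) → Fin (q n) → Evec p → ℝ)
    (xstar : Evec p) (x : Fin N → Evec p) : ℝ :=
  ∑ n, (locf f n (x n) - locf f n xstar - ⟪gradient (locf f n) xstar, x n - xstar⟫)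

/-- The quadratic form `aᵀ (M ⊗ I_p) a` of an extended weight matrix, written blockwise. -/
def quadForm {N p : ℕ} (M : Matrix (Fin N) (Fin N) ℝ) (a : Fin N → Evec p) : ℝ :=
  ∑ n, ⟪a n, ∑ m, M n m • a m⟫

/-- The squared Euclidean norm of a block vector of `ℝ^{Np}`. -/
def sqnormB {N p : ℕ} (a : Fin N → Evec p) : ℝ := ∑ n, ‖a n‖^2

/-- The gradient table obtained from `y` by replacing, at each node `n`, the entry
`i n` by the current iterate `x n`. -/
def tblUpd {N p : ℕ} {q : Fin N → ℕ}
    (x : Fin N → Evec p)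
    (y : (n : Fin N) → Fin (q n) → Evec p)
    (i : (n : Fin N) → Fin (q n)) : (n : Fin N) → Fin (q n) → Evec p :=
  fun n => Function.update (y n) (i n) (x n)

end

/-! Subtracting `∇f_n(x̃*)`, the error of node `n` is `aⱼ - zⱼ + z̄` with
`aⱼ = ∇f_{n,j}(x_n) - ∇f_{n,j}(x̃*)` and `zⱼ = ∇f_{n,j}(y_{n,j}) - ∇f_{n,j}(x̃*)`. Centering both
families and using `‖u - v‖² ≤ 2‖u‖² + 2‖v‖²` with the variance identity gives
`E‖a - z + z̄‖² ≤ 2 E‖a‖² + 2 E‖z‖² - ‖ā‖²`, where `ā = ∇f_n(x_n) - ∇f_n(x̃*)`. Cocoercivity of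
gradients of convex `L`-smooth functions, `‖∇g u - ∇g v‖² ≤ 2L (g u - g v - ⟪∇g v, u - v⟫)`,
turns `E‖a‖²` and `E‖z‖²` into the Bregman gaps on the right. Since the joint index is uniform,
each node only sees the uniform average over its own index. -/

section Smooth

variable {E : Type*} [NormedAddCommGroup E] [InnerProductSpace ℝ E] [CompleteSpace E]
  {g : E → ℝ} {L : ℝ}

noncomputable def bregmanDiv (g : E → ℝ) (a b : E) : ℝ :=
  g a - g b - ⟪gradient g b, a - b⟫

lemma hasDerivAt_comp_lineMap (hg : Differentiable ℝ g) (a b : E) (t : ℝ) :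
    HasDerivAt (fun s => g (AffineMap.lineMap a b s))
      ⟪gradient g (AffineMap.lineMap a b t), b - a⟫ t := by
  rw [inner_gradient_left]
  exact (hg _).hasFDerivAt.comp_hasDerivAt t AffineMap.hasDerivAt_lineMap

lemma ConvexOn.bregmanDiv_nonneg (hc : ConvexOn ℝ Set.univ g) (hg : Differentiable ℝ g)
    (a b : E) : 0 ≤ bregmanDiv g a b := by
  have hφ : ConvexOn ℝ Set.univ (fun t : ℝ => g (AffineMap.lineMap b a t)) :=
    hc.comp_affineMap (AffineMap.lineMap b a)
  have hslope := hφ.le_slope_of_hasDerivAt (Set.mem_univ 0) (Set.mem_univ 1) one_pos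
    (by simpa using hasDerivAt_comp_lineMap hg b a 0)
  rw [slope_def_field, sub_zero, div_one, ← map_sub, ← inner_gradient_left] at hslope
  simp only [AffineMap.lineMap_apply_zero, AffineMap.lineMap_apply_one] at hslope
  rw [bregmanDiv]
  linarith

lemma bregmanDiv_le_of_lipschitz_gradient (hg : Differentiable ℝ g)
    (hlip : ∀ u v, ‖gradient g u - gradient g v‖ ≤ L * ‖u - v‖) (a b : E) :
    bregmanDiv g b a ≤ L / 2 * ‖b - a‖ ^ 2 := by
  -- `ψ t = g (a + t (b - a)) - t ⟪∇g a, b - a⟫ - L t² ‖b - a‖² / 2` is antitone on `[0, 1]`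
  set c := ⟪gradient g a, b - a⟫
  set ψ : ℝ → ℝ := fun t => g (AffineMap.lineMap a b t) - t * c - L / 2 * t ^ 2 * ‖b - a‖ ^ 2
  have hψ : ∀ t, HasDerivAt ψ
      (⟪gradient g (AffineMap.lineMap a b t), b - a⟫ - c - L * t * ‖b - a‖ ^ 2) t := by
    intro t
    refine (((hasDerivAt_comp_lineMap hg a b t).fun_sub ((hasDerivAt_id' t).mul_const c)).fun_sub
      (((hasDerivAt_pow 2 t).const_mul (L / 2)).mul_const (‖b - a‖ ^ 2))).congr_deriv ?_
    push_cast
    ring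
  have hanti : AntitoneOn ψ (Set.Icc 0 1) := by
    refine antitoneOn_of_deriv_nonpos (convex_Icc 0 1)
      (fun t _ => (hψ t).continuousAt.continuousWithinAt)
      (fun t _ => (hψ t).differentiableAt.differentiableWithinAt) fun t ht => ?_
    rw [interior_Icc] at ht
    have hdist : ‖gradient g (AffineMap.lineMap a b t) - gradient g a‖ ≤ L * (t * ‖b - a‖) := by
      simpa [← dist_eq_norm, dist_lineMap_left, abs_of_pos ht.1, dist_comm a b]
        using hlip (AffineMap.lineMap a b t) a
    have hcs := real_inner_le_norm (gradient g (AffineMap.lineMap a b t) - gradient g a) (b - a)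
    rw [inner_sub_left] at hcs
    rw [(hψ t).deriv]
    nlinarith [norm_nonneg (b - a)]
  have h01 := hanti (Set.left_mem_Icc.mpr zero_le_one) (Set.right_mem_Icc.mpr zero_le_one)
    zero_le_one
  simp only [ψ, AffineMap.lineMap_apply_zero, AffineMap.lineMap_apply_one] at h01
  rw [bregmanDiv]
  linarith

lemma ConvexOn.sq_norm_gradient_sub_le (hc : ConvexOn ℝ Set.univ g) (hg : Differentiable ℝ g)
    (hL : 0 < L) (hlip : ∀ u v, ‖gradient g u - gradient g v‖ ≤ L * ‖u - v‖) (a b : E) :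
    ‖gradient g a - gradient g b‖ ^ 2 ≤ 2 * L * bregmanDiv g a b := by
  -- compare convexity from `b` with smoothness from `a` at the gradient step `c`
  set G := gradient g a - gradient g b
  set c := a - L⁻¹ • G
  have hlower := hc.bregmanDiv_nonneg hg c b
  have hupper := bregmanDiv_le_of_lipschitz_gradient hg hlip a c
  have hca : c - a = -(L⁻¹ • G) := by simp [c]
  have hcb : c - b = (a - b) - L⁻¹ • G := by simp only [c]; abel
  have hG : L⁻¹ * ⟪gradient g a, G⟫ - L⁻¹ * ⟪gradient g b, G⟫ = L⁻¹ * ‖G‖ ^ 2 := by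
    rw [← mul_sub, ← inner_sub_left, real_inner_self_eq_norm_sq]
  have hstep : L / 2 * ‖c - a‖ ^ 2 = L⁻¹ * ‖G‖ ^ 2 / 2 := by
    rw [hca, norm_neg, norm_smul, Real.norm_eq_abs, abs_of_pos (inv_pos.mpr hL)]
    field_simp
  rw [hstep] at hupper
  simp only [bregmanDiv, hca, hcb, inner_neg_right, inner_sub_right, real_inner_smul_right]
    at hlower hupper
  have hdiv : L⁻¹ * ‖G‖ ^ 2 / 2 ≤ bregmanDiv g a b := by
    rw [bregmanDiv, inner_sub_right]
    linarith
  calc ‖G‖ ^ 2 = 2 * L * (L⁻¹ * ‖G‖ ^ 2 / 2) := by field_simp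
    _ ≤ 2 * L * bregmanDiv g a b := by gcongr

end Smooth

lemma average_pi_comp_eval {ι : Type*} [Fintype ι] [DecidableEq ι] {κ : ι → Type*}
    [∀ m, Fintype (κ m)] [∀ m, Nonempty (κ m)] (n : ι) (T : κ n → ℝ) :
    (Fintype.card (∀ m, κ m) : ℝ)⁻¹ * ∑ i : ∀ m, κ m, T (i n)
      = (Fintype.card (κ n) : ℝ)⁻¹ * ∑ j, T j := by
  rw [Fintype.sum_equiv (Equiv.piSplitAt n κ) (fun i => T (i n)) (fun p => T p.1) fun _ => rfl,
    Fintype.sum_prod_type, Fintype.card_congr (Equiv.piSplitAt n κ), Fintype.card_prod]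
  simp only [sum_const, card_univ, nsmul_eq_mul, ← mul_sum, Nat.cast_mul]
  have : (Fintype.card (∀ j : {j // j ≠ n}, κ j) : ℝ) ≠ 0 := by
    exact_mod_cast Fintype.card_ne_zero
  field_simp

section Average

variable {F : Type*} [NormedAddCommGroup F] [InnerProductSpace ℝ F] {ι : Type*} [Fintype ι]

lemma sum_norm_add_sq_of_sum_eq_zero {u : ι → F} (hu : ∑ i, u i = 0) (c : F) :
    ∑ i, ‖u i + c‖ ^ 2 = ∑ i, ‖u i‖ ^ 2 + Fintype.card ι * ‖c‖ ^ 2 := by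
  simp only [norm_add_sq_real, sum_add_distrib, ← mul_sum, ← sum_inner, hu,
    inner_zero_left, sum_const, card_univ, nsmul_eq_mul]
  ring

variable [Nonempty ι]

lemma sum_sub_average_eq_zero (v : ι → F) :
    ∑ i, (v i - (Fintype.card ι : ℝ)⁻¹ • ∑ j, v j) = 0 := by
  have : (Fintype.card ι : ℝ) ≠ 0 := by exact_mod_cast Fintype.card_ne_zero
  rw [sum_sub_distrib, sum_const, card_univ, ← Nat.cast_smul_eq_nsmul ℝ, smul_smul,
    mul_inv_cancel₀ this, one_smul, sub_self]

lemma sum_norm_sq_eq_sum_norm_sub_average_sq_add (v : ι → F) :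
    ∑ i, ‖v i‖ ^ 2 = ∑ i, ‖v i - (Fintype.card ι : ℝ)⁻¹ • ∑ j, v j‖ ^ 2
      + Fintype.card ι * ‖(Fintype.card ι : ℝ)⁻¹ • ∑ j, v j‖ ^ 2 := by
  rw [← sum_norm_add_sq_of_sum_eq_zero (sum_sub_average_eq_zero v)]
  simp

lemma average_norm_sub_add_average_sq_le (a z : ι → F) :
    (Fintype.card ι : ℝ)⁻¹ * ∑ i, ‖a i - z i + (Fintype.card ι : ℝ)⁻¹ • ∑ j, z j‖ ^ 2
      ≤ 2 * ((Fintype.card ι : ℝ)⁻¹ * ∑ i, ‖a i‖ ^ 2)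
        + 2 * ((Fintype.card ι : ℝ)⁻¹ * ∑ i, ‖z i‖ ^ 2)
        - ‖(Fintype.card ι : ℝ)⁻¹ • ∑ j, a j‖ ^ 2 := by
  set k : ℝ := (Fintype.card ι : ℝ)
  set abar := k⁻¹ • ∑ j, a j
  set zbar := k⁻¹ • ∑ j, z j
  have hk : 0 < k := by positivity
  -- center both families: the centered differences have mean zero
  have hsplit : ∀ i, a i - z i + zbar = ((a i - abar) - (z i - zbar)) + abar := fun i => by abel
  have hmean : ∑ i, ((a i - abar) - (z i - zbar)) = 0 := by
    rw [sum_sub_distrib, sum_sub_average_eq_zero, sum_sub_average_eq_zero, sub_zero]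
  have hsq : ∀ i,
      ‖(a i - abar) - (z i - zbar)‖ ^ 2 ≤ 2 * ‖a i - abar‖ ^ 2 + 2 * ‖z i - zbar‖ ^ 2 :=
    fun i => (pow_le_pow_left₀ (norm_nonneg _) (norm_sub_le _ _) 2).trans
      (by nlinarith [add_sq_le (a := ‖a i - abar‖) (b := ‖z i - zbar‖)])
  have hsum : ∑ i, ‖a i - z i + zbar‖ ^ 2
      ≤ 2 * ∑ i, ‖a i‖ ^ 2 + 2 * ∑ i, ‖z i‖ ^ 2 - k * ‖abar‖ ^ 2 := by
    have ha := sum_norm_sq_eq_sum_norm_sub_average_sq_add a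
    have hz := sum_norm_sq_eq_sum_norm_sub_average_sq_add z
    have hc := sum_le_sum fun i (_ : i ∈ univ) => hsq i
    simp only [hsplit, sum_norm_add_sq_of_sum_eq_zero hmean, sum_add_distrib, ← mul_sum] at hc ⊢
    linarith [mul_nonneg hk.le (sq_nonneg ‖zbar‖)]
  calc k⁻¹ * ∑ i, ‖a i - z i + zbar‖ ^ 2
      ≤ k⁻¹ * (2 * ∑ i, ‖a i‖ ^ 2 + 2 * ∑ i, ‖z i‖ ^ 2 - k * ‖abar‖ ^ 2) := by gcongr
    _ = _ := by field_simp

end Average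

section Family

variable {E : Type*} [NormedAddCommGroup E] [InnerProductSpace ℝ E] [CompleteSpace E]
  {ι : Type*} [Fintype ι] {g : ι → E → ℝ} {L : ℝ}

lemma hasGradientAt_const_mul_sum (hg : ∀ i, Differentiable ℝ (g i)) (c : ℝ) (w : E) :
    HasGradientAt (fun w => c * ∑ i, g i w) (c • ∑ i, gradient (g i) w) w := by
  rw [hasGradientAt_iff_hasFDerivAt, map_smul, map_sum]
  simp only [toDual_gradient]
  exact (HasFDerivAt.fun_sum fun i _ => (hg i w).hasFDerivAt).const_mul c

lemma bregmanDiv_const_mul_sum (hg : ∀ i, Differentiable ℝ (g i)) (c : ℝ) (a b : E) :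
    bregmanDiv (fun w => c * ∑ i, g i w) a b = c * ∑ i, bregmanDiv (g i) a b := by
  simp only [bregmanDiv, (hasGradientAt_const_mul_sum hg c b).gradient, real_inner_smul_left,
    sum_inner, sum_sub_distrib]
  ring

lemma average_sq_norm_gradient_sub_le (hc : ∀ i, ConvexOn ℝ Set.univ (g i))
    (hg : ∀ i, Differentiable ℝ (g i)) (hL : 0 < L)
    (hlip : ∀ i u v, ‖gradient (g i) u - gradient (g i) v‖ ≤ L * ‖u - v‖)
    (y : ι → E) (xstar : E) :
    (Fintype.card ι : ℝ)⁻¹ * ∑ i, ‖gradient (g i) (y i) - gradient (g i) xstar‖ ^ 2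
      ≤ 2 * L * ((Fintype.card ι : ℝ)⁻¹ * ∑ i, bregmanDiv (g i) (y i) xstar) := by
  calc _ ≤ (Fintype.card ι : ℝ)⁻¹ * ∑ i, 2 * L * bregmanDiv (g i) (y i) xstar := by
        gcongr with i
        exact (hc i).sq_norm_gradient_sub_le (hg i) hL (hlip i) _ _
    _ = _ := by rw [← mul_sum]; ring

lemma average_sq_norm_saga_gradient_sub_le [Nonempty ι] (hc : ∀ i, ConvexOn ℝ Set.univ (g i))
    (hg : ∀ i, Differentiable ℝ (g i)) (hL : 0 < L)
    (hlip : ∀ i u v, ‖gradient (g i) u - gradient (g i) v‖ ≤ L * ‖u - v‖)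
    (x xstar : E) (y : ι → E) :
    (Fintype.card ι : ℝ)⁻¹ * ∑ j, ‖gradient (g j) x - gradient (g j) (y j)
        + (Fintype.card ι : ℝ)⁻¹ • ∑ i, gradient (g i) (y i)
        - gradient (fun w => (Fintype.card ι : ℝ)⁻¹ * ∑ i, g i w) xstar‖ ^ 2
      ≤ 4 * L * ((Fintype.card ι : ℝ)⁻¹ * ∑ i, bregmanDiv (g i) (y i) xstar)
        - ‖gradient (fun w => (Fintype.card ι : ℝ)⁻¹ * ∑ i, g i w) x
          - gradient (fun w => (Fintype.card ι : ℝ)⁻¹ * ∑ i, g i w) xstar‖ ^ 2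
        + 4 * L * bregmanDiv (fun w => (Fintype.card ι : ℝ)⁻¹ * ∑ i, g i w) x xstar := by
  set k : ℝ := (Fintype.card ι : ℝ)
  have hgrad : ∀ w, gradient (fun w => k⁻¹ * ∑ i, g i w) w = k⁻¹ • ∑ i, gradient (g i) w :=
    fun w => (hasGradientAt_const_mul_sum hg _ w).gradient
  set A := fun j => gradient (g j) x - gradient (g j) xstar
  set Z := fun j => gradient (g j) (y j) - gradient (g j) xstar
  have hterm : ∀ j, gradient (g j) x - gradient (g j) (y j) + k⁻¹ • ∑ i, gradient (g i) (y i)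
      - gradient (fun w => k⁻¹ * ∑ i, g i w) xstar = A j - Z j + k⁻¹ • ∑ i, Z i := fun j => by
    simp only [hgrad, A, Z, sum_sub_distrib, smul_sub]
    abel
  have hmeanA : k⁻¹ • ∑ i, A i = gradient (fun w => k⁻¹ * ∑ i, g i w) x
      - gradient (fun w => k⁻¹ * ∑ i, g i w) xstar := by
    simp only [hgrad, A, sum_sub_distrib, smul_sub]
  have hA := average_sq_norm_gradient_sub_le hc hg hL hlip (fun _ => x) xstar
  have hZ := average_sq_norm_gradient_sub_le hc hg hL hlip y xstar
  rw [← bregmanDiv_const_mul_sum hg] at hA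
  calc _ = k⁻¹ * ∑ j, ‖A j - Z j + k⁻¹ • ∑ i, Z i‖ ^ 2 := by simp only [hterm]
    _ ≤ 2 * (k⁻¹ * ∑ i, ‖A i‖ ^ 2) + 2 * (k⁻¹ * ∑ i, ‖Z i‖ ^ 2) - ‖k⁻¹ • ∑ i, A i‖ ^ 2 :=
      average_norm_sub_add_average_sq_le A Z
    _ ≤ _ := by rw [hmeanA]; linarith

end Family

theorem dsa_lemma2_intermediate_bound_general
    {N p : ℕ} {q : Fin N → ℕ} (hq : ∀ n, 0 < q n)
    (L : ℝ) (hL : 0 < L)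
    (f : (n : Fin N) → Fin (q n) → Evec p → ℝ)
    (hdiff : ∀ n i, Differentiable ℝ (f n i))
    (hcvx : ∀ n i, ConvexOn ℝ Set.univ (f n i))
    (hlip : ∀ n i a b, ‖gradient (f n i) a - gradient (f n i) b‖ ≤ L * ‖a - b‖)
    (xstar : Evec p)
    (x : Fin N → Evec p)
    (y : (n : Fin N) → Fin (q n) → Evec p) :
    (∏ n, (q n : ℝ))⁻¹ * ∑ i : (n : Fin N) → Fin (q n),
        (∑ n, ‖hatg f x y n (i n) - gradient (locf f n) xstar‖^2)
      ≤ 4 * L * ptbl f xstar y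
        - ∑ n, ‖gradient (locf f n) (x n) - gradient (locf f n) xstar‖^2
        + 4 * L * optgap f xstar x := by
  have (n : Fin N) : Nonempty (Fin (q n)) := ⟨⟨0, hq n⟩⟩
  have hnode := fun n => average_sq_norm_saga_gradient_sub_le (hcvx n) (hdiff n) hL (hlip n)
    (x n) xstar (y n)
  simp only [Fintype.card_fin] at hnode
  calc _ = ∑ n, (q n : ℝ)⁻¹ * ∑ j, ‖hatg f x y n j - gradient (locf f n) xstar‖ ^ 2 := by
        rw [sum_comm, mul_sum]
        refine sum_congr rfl fun n _ => ?_
        have h := average_pi_comp_eval (κ := fun m => Fin (q m)) n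
          fun j => ‖hatg f x y n j - gradient (locf f n) xstar‖ ^ 2
        simpa only [Fintype.card_pi, Fintype.card_fin, Nat.cast_prod] using h
    _ ≤ ∑ n, (4 * L * ((q n : ℝ)⁻¹ * ∑ i, bregmanDiv (f n i) (y n i) xstar)
          - ‖gradient (locf f n) (x n) - gradient (locf f n) xstar‖ ^ 2
          + 4 * L * bregmanDiv (locf f n) (x n) xstar) := sum_le_sum fun n _ => hnode n
    _ = _ := by
        rw [ptbl, optgap, mul_sum, mul_sum, ← sum_sub_distrib, ← sum_add_distrib]
        rfl

/-- **Intermediate bound in the proof of Lemma 2 of the DSA paper.**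
With all `f_{n,i}` convex and differentiable with `L`-Lipschitz gradients, for any
iterate `x` and gradient table `y`, averaging uniformly over joint index choices,
`E_i ‖ĝ(i) − ∇f(x*)‖² ≤ 4L p(y) − ‖∇f(x) − ∇f(x*)‖² + 4L [f(x) − f(x*) − ⟨∇f(x*), x − x*⟩]`. -/
theorem dsa_lemma2_intermediate_bound
    {N p : ℕ} {q : Fin N → ℕ} (hq : ∀ n, 0 < q n)
    (L : ℝ) (hL : 0 < L)
    (f : (n : Fin N) → Fin (q n) → Evec p → ℝ)
    (hdiff : ∀ n i, Differentiable ℝ (f n i))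
    (hcvx : ∀ n i, ConvexOn ℝ Set.univ (f n i))
    (hlip : ∀ n i a b, ‖gradient (f n i) a - gradient (f n i) b‖ ≤ L * ‖a - b‖)
    (xstar : Evec p)
    (hxstar : ∀ w, ∑ n, locf f n xstar ≤ ∑ n, locf f n w)
    (x : Fin N → Evec p)
    (y : (n : Fin N) → Fin (q n) → Evec p) :
    (∏ n, (q n : ℝ))⁻¹ * ∑ i : (n : Fin N) → Fin (q n),
        (∑ n, ‖hatg f x y n (i n) - gradient (locf f n) xstar‖^2)
      ≤ 4 * L * ptbl f xstar y
        - ∑ n, ‖gradient (locf f n) (x n) - gradient (locf f n) xstar‖^2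
        + 4 * L * optgap f xstar x :=
  dsa_lemma2_intermediate_bound_general hq L hL f hdiff hcvx hlip xstar x y
end

section
/- (Lemma 3) Let each f_{n,i} be differentiable, μ-strongly convex, with L-Lipschitz gradient, and let the weight matrices satisfy Assumption 1. Fix x, v ∈ ℝ^{Np} and a gradient table y, and for each joint index i define x⁺(i) = x − α ĝ(i) − (I − Z̃)x − U v and v⁺(i) = v + U x⁺(i); write u = (x; v), u⁺(i) = (x⁺(i); v⁺(i)), u* = (x*; v*). Then for any η > 0, E_i[‖u⁺(i) − u*‖²_G] ≤ ‖u − u*‖²_G − 2 E_i[‖x⁺(i) − x*‖²_{I+Z−2Z̃}] + (4αL/η) p(y) − E_i[‖x⁺(i) − x‖²_{Z̃ − 2αη I}] − E_i[‖v⁺(i) − v‖²] − (4αμ/L − 2α(2L−μ)/η) [f(x) − f(x*) − ⟨∇f(x*), x − x*⟩], where E_i denotes the uniform average over joint indices i ∈ ∏_n {1,…,q_n}. -/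
open Finset
open scoped RealInnerProductSpace

/-!
The optimality condition `α ∇f(x*) + U v* = 0`, the relation `U² = Z̃ - Z` and the fact that
`x*` is fixed by `Z` and `Z̃` turn one DSA step into the exact identity
`‖u⁺ - u*‖²_G = ‖u - u*‖²_G - 2‖x⁺ - x*‖²_{I+Z-2Z̃} - ‖x⁺ - x‖²_{Z̃} - ‖v⁺ - v‖²
  - 2α ⟨x⁺ - x*, ĝ - ∇f(x*)⟩`.
Splitting `x⁺ - x* = (x⁺ - x) + (x - x*)`, Young's inequality bounds the first part by
`2αη ‖x⁺ - x‖² + α/(2η) ‖ĝ - ∇f(x*)‖²`. Every gap in sight is a mean of Bregman divergences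
`D_{n,i}(a, x̃*)` of the instantaneous functions. Averaged over the sampled indices, the SAGA
estimator is unbiased node by node, so the second part has mean
`⟨x - x*, ∇f(x) - ∇f(x*)⟩ ≥ μ‖x - x*‖² ≥ (2μ/L) (f(x) - f(x*) - ⟨∇f(x*), x - x*⟩)`, while its
second moment is at most `4L (f(x) - f(x*) - ⟨∇f(x*), x - x*⟩ + p(y))` by cocoercivity
`‖∇f_{n,i}(a) - ∇f_{n,i}(b)‖² ≤ 2L D_{n,i}(a, b)` and since a variance is at most the second
moment.
-/
open Filter Topology
open scoped BigOperators

section FirstOrder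

variable {E : Type*} [NormedAddCommGroup E] [InnerProductSpace ℝ E] [CompleteSpace E]
  {g : E → ℝ} {μ L : ℝ}

noncomputable def bregman (g : E → ℝ) (a b : E) : ℝ := g a - g b - ⟪gradient g b, a - b⟫

theorem hasDerivAt_comp_add_smul {a v : E} {t : ℝ} (hg : DifferentiableAt ℝ g (a + t • v)) :
    HasDerivAt (fun s : ℝ => g (a + s • v)) ⟪gradient g (a + t • v), v⟫ t := by
  have hline : HasDerivAt (fun s : ℝ => a + s • v) v t := by
    simpa using ((hasDerivAt_id t).smul_const v).const_add a
  have h := (hasGradientAt_iff_hasFDerivAt.mp hg.hasGradientAt).comp_hasDerivAt t hline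
  rwa [InnerProductSpace.toDual_apply_apply] at h

theorem StrongConvexOn.mul_norm_sq_le_bregman {b : E} (hsc : StrongConvexOn Set.univ μ g)
    (hg : DifferentiableAt ℝ g b) (a : E) : μ / 2 * ‖a - b‖ ^ 2 ≤ bregman g a b := by
  set φ : ℝ → ℝ := fun t => g (b + t • (a - b))
  have hφ : HasDerivAt φ ⟪gradient g b, a - b⟫ 0 := by
    simpa [φ] using hasDerivAt_comp_add_smul (t := 0) (v := a - b) (by simpa using hg)
  -- strong convexity along the segment bounds every difference quotient at `0⁺`
  have hslope : ∀ᶠ t in 𝓝[>] (0 : ℝ),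
      t⁻¹ • (φ (0 + t) - φ 0) ≤ g a - g b - (1 - t) * (μ / 2 * ‖a - b‖ ^ 2) := by
    filter_upwards [Ioo_mem_nhdsGT (zero_lt_one' ℝ)] with t ⟨ht0, ht1⟩
    have h := hsc.2 (Set.mem_univ b) (Set.mem_univ a) (sub_nonneg.2 ht1.le) ht0.le
      (sub_add_cancel 1 t)
    have hpt : (1 - t) • b + t • a = b + t • (a - b) := by module
    rw [hpt, norm_sub_rev] at h
    simp only [φ, zero_add, zero_smul, add_zero, smul_eq_mul]
    rw [inv_mul_le_iff₀ ht0]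
    simp only [smul_eq_mul] at h
    linarith
  have hlim : Tendsto (fun t : ℝ => g a - g b - (1 - t) * (μ / 2 * ‖a - b‖ ^ 2)) (𝓝[>] 0)
      (𝓝 (g a - g b - (1 - 0) * (μ / 2 * ‖a - b‖ ^ 2))) :=
    ((continuous_const.sub ((continuous_const.sub continuous_id).mul continuous_const)).tendsto
      0).mono_left nhdsWithin_le_nhds
  have := le_of_tendsto_of_tendsto hφ.tendsto_slope_zero_right hlim hslope
  rw [bregman]
  linarith

theorem bregman_le_of_lipschitz_gradient (hg : Differentiable ℝ g)
    (hlip : ∀ a b, ‖gradient g a - gradient g b‖ ≤ L * ‖a - b‖) (a b : E) :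
    bregman g a b ≤ L / 2 * ‖a - b‖ ^ 2 := by
  set v := a - b
  set ψ : ℝ → ℝ := fun t => g (b + t • v) - t * ⟪gradient g b, v⟫ - L / 2 * t ^ 2 * ‖v‖ ^ 2
  have hψ : ∀ t, HasDerivAt ψ
      (⟪gradient g (b + t • v), v⟫ - ⟪gradient g b, v⟫ - L * t * ‖v‖ ^ 2) t := by
    intro t
    have h := ((hasDerivAt_comp_add_smul (a := b) (v := v) (hg _)).sub
      ((hasDerivAt_id t).mul_const ⟪gradient g b, v⟫)).sub
      (((hasDerivAt_pow 2 t).const_mul (L / 2)).mul_const (‖v‖ ^ 2))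
    refine h.congr_deriv ?_
    simp only [Nat.add_one_sub_one, pow_one, Nat.cast_ofNat]
    ring
  have hanti : AntitoneOn ψ (Set.Ici 0) := by
    refine antitoneOn_of_deriv_nonpos (convex_Ici 0)
      (fun t _ => (hψ t).continuousAt.continuousWithinAt)
      (fun t _ => (hψ t).differentiableAt.differentiableWithinAt) fun t ht => ?_
    rw [interior_Ici, Set.mem_Ioi] at ht
    rw [(hψ t).deriv, ← inner_sub_left]
    calc ⟪gradient g (b + t • v) - gradient g b, v⟫ - L * t * ‖v‖ ^ 2
        ≤ L * ‖(b + t • v) - b‖ * ‖v‖ - L * t * ‖v‖ ^ 2 := by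
          gcongr
          exact (real_inner_le_norm _ _).trans
            (mul_le_mul_of_nonneg_right (hlip _ _) (norm_nonneg _))
      _ = 0 := by
          rw [add_sub_cancel_left, norm_smul, Real.norm_of_nonneg ht.le]
          ring
  have h01 := hanti Set.self_mem_Ici (Set.mem_Ici.2 zero_le_one) zero_le_one
  simp only [ψ, v, one_smul, zero_smul, add_zero, add_sub_cancel, zero_mul, sub_zero, one_mul,
    one_pow, ne_eq, OfNat.ofNat_ne_zero, not_false_eq_true, zero_pow, mul_zero] at h01
  rw [bregman]
  linarith

theorem ConvexOn.bregman_nonneg {b : E} (hc : ConvexOn ℝ Set.univ g) (hg : DifferentiableAt ℝ g b)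
    (a : E) : 0 ≤ bregman g a b := by
  simpa using (strongConvexOn_zero.2 hc).mul_norm_sq_le_bregman hg a

theorem ConvexOn.norm_sub_gradient_sq_le_bregman (hc : ConvexOn ℝ Set.univ g)
    (hg : Differentiable ℝ g) (hL : 0 < L)
    (hlip : ∀ a b, ‖gradient g a - gradient g b‖ ≤ L * ‖a - b‖) (a b : E) :
    ‖gradient g a - gradient g b‖ ^ 2 ≤ 2 * L * bregman g a b := by
  set G := gradient g a - gradient g b
  -- compare `g` at `w = a - G / L` from below (convexity at `b`) and from above (smoothness at `a`)
  set w := a - L⁻¹ • G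
  have hlow := hc.bregman_nonneg (hg b) w
  have hup := bregman_le_of_lipschitz_gradient hg hlip w a
  have hwb : w - b = (a - b) - L⁻¹ • G := by simp only [w]; abel
  have hwa : w - a = -(L⁻¹ • G) := by simp only [w]; abel
  have hGG : ⟪gradient g a, G⟫ - ⟪gradient g b, G⟫ = ‖G‖ ^ 2 := by
    rw [← inner_sub_left, real_inner_self_eq_norm_sq]
  rw [bregman, hwb, inner_sub_right, real_inner_smul_right] at hlow
  rw [bregman, hwa, inner_neg_right, real_inner_smul_right, norm_neg, norm_smul,
    Real.norm_of_nonneg (inv_nonneg.2 hL.le)] at hup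
  have hquad : L / 2 * (L⁻¹ * ‖G‖) ^ 2 = L⁻¹ * ‖G‖ ^ 2 / 2 := by field_simp
  have hlin : L⁻¹ * ⟪gradient g a, G⟫ - L⁻¹ * ⟪gradient g b, G⟫ = L⁻¹ * ‖G‖ ^ 2 := by
    rw [← mul_sub, hGG]
  have hkey : L⁻¹ * ‖G‖ ^ 2 / 2 ≤ bregman g a b := by
    rw [bregman]
    linarith
  calc ‖G‖ ^ 2 = 2 * L * (L⁻¹ * ‖G‖ ^ 2 / 2) := by field_simp
    _ ≤ 2 * L * bregman g a b := by gcongr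

theorem StrongConvexOn.mul_norm_sq_le_inner_gradient_sub (hsc : StrongConvexOn Set.univ μ g)
    (hg : Differentiable ℝ g) (a b : E) :
    μ * ‖a - b‖ ^ 2 ≤ ⟪gradient g a - gradient g b, a - b⟫ := by
  have hab := hsc.mul_norm_sq_le_bregman (hg b) a
  have hba := hsc.mul_norm_sq_le_bregman (hg a) b
  rw [bregman, norm_sub_rev] at hba
  rw [bregman] at hab
  have : ⟪gradient g a, b - a⟫ = -⟪gradient g a, a - b⟫ := by
    rw [← inner_neg_right, neg_sub]
  rw [inner_sub_left]
  linarith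

end FirstOrder

theorem norm_sub_sq_le_two_mul {F : Type*} [NormedAddCommGroup F] [InnerProductSpace ℝ F]
    (a b : F) : ‖a - b‖ ^ 2 ≤ 2 * ‖a‖ ^ 2 + 2 * ‖b‖ ^ 2 := by
  linarith [parallelogram_law_with_norm ℝ a b, sq_nonneg ‖a + b‖]

theorem neg_two_inner_le {F : Type*} [NormedAddCommGroup F] [InnerProductSpace ℝ F]
    {η : ℝ} (hη : 0 < η) (a b : F) :
    -(2 * ⟪a, b⟫) ≤ 2 * η * ‖a‖ ^ 2 + ‖b‖ ^ 2 / (2 * η) := by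
  have h := norm_add_sq_real ((2 * η) • a) b
  rw [norm_smul, real_inner_smul_left, Real.norm_of_nonneg (by positivity)] at h
  have h0 : 0 ≤ ‖(2 * η) • a + b‖ ^ 2 / (2 * η) := by positivity
  rw [h] at h0
  field_simp at h0 ⊢
  linarith

theorem expect_pi_eval {ι M : Type*} [Fintype ι] [DecidableEq ι] {κ : ι → Type*}
    [∀ i, Fintype (κ i)] [∀ i, Nonempty (κ i)] [AddCommMonoid M] [Module ℚ≥0 M]
    (n : ι) (F : κ n → M) : 𝔼 x : (∀ i, κ i), F (x n) = 𝔼 j, F j := by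
  rw [Fintype.expect_equiv (Equiv.piSplitAt n κ) (fun x => F (x n)) (fun z => F z.1) fun _ => rfl,
    ← univ_product_univ, expect_product]
  simp

theorem expect_pi_sum_eval {ι : Type*} [Fintype ι] [DecidableEq ι] {κ : ι → Type*}
    [∀ i, Fintype (κ i)] [∀ i, Nonempty (κ i)] (F : (i : ι) → κ i → ℝ) :
    𝔼 x : (∀ i, κ i), ∑ n, F n (x n) = ∑ n, 𝔼 j, F n j := by
  rw [expect_sum_comm]
  exact sum_congr rfl fun n _ => expect_pi_eval n (F n)

theorem expect_eq_inv_card_mul_sum {ι : Type*} [Fintype ι] (F : ι → ℝ) :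
    𝔼 i, F i = (Fintype.card ι : ℝ)⁻¹ * ∑ i, F i := by
  rw [Fintype.expect_eq_sum_div_card, div_eq_inv_mul]

theorem hasGradientAt_const_mul_sum_s12 {E ι : Type*} [NormedAddCommGroup E] [InnerProductSpace ℝ E]
    [CompleteSpace E] {g : ι → E → ℝ} {g' : ι → E} {w : E} (s : Finset ι) (c : ℝ)
    (h : ∀ j ∈ s, HasGradientAt (g j) (g' j) w) :
    HasGradientAt (fun w => c * ∑ j ∈ s, g j w) (c • ∑ j ∈ s, g' j) w := by
  rw [hasGradientAt_iff_hasFDerivAt, map_smul, map_sum]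
  exact (HasFDerivAt.fun_sum fun j hj => hasGradientAt_iff_hasFDerivAt.1 (h j hj)).const_mul c

section Mean

variable {E ι : Type*} [NormedAddCommGroup E] [InnerProductSpace ℝ E] [Fintype ι]

theorem expect_inner_eq_inner_mean (a : E) (B : ι → E) :
    𝔼 j, ⟪a, B j⟫ = ⟪a, (Fintype.card ι : ℝ)⁻¹ • ∑ j, B j⟫ := by
  rw [expect_eq_inv_card_mul_sum, real_inner_smul_right, inner_sum]

variable [Nonempty ι]

theorem expect_inner_sub_mean (a : E) (B : ι → E) :
    𝔼 j, ⟪a, B j - (Fintype.card ι : ℝ)⁻¹ • ∑ k, B k⟫ = 0 := by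
  simp_rw [inner_sub_right]
  rw [expect_sub_distrib, Fintype.expect_const, expect_inner_eq_inner_mean, sub_self]

theorem expect_norm_sub_mean_sq_le (B : ι → E) :
    𝔼 j, ‖B j - (Fintype.card ι : ℝ)⁻¹ • ∑ k, B k‖ ^ 2 ≤ 𝔼 j, ‖B j‖ ^ 2 := by
  set m := (Fintype.card ι : ℝ)⁻¹ • ∑ k, B k
  have hm : 𝔼 j, ⟪m, B j⟫ = ‖m‖ ^ 2 := by
    rw [expect_inner_eq_inner_mean, real_inner_self_eq_norm_sq]
  simp_rw [norm_sub_sq_real, real_inner_comm m]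
  rw [expect_add_distrib, expect_sub_distrib, ← mul_expect, hm, Fintype.expect_const]
  linarith [sq_nonneg ‖m‖]

end Mean

section SAGA

variable {E ι : Type*} [NormedAddCommGroup E] [InnerProductSpace ℝ E] [CompleteSpace E]
  [Fintype ι] {g : ι → E → ℝ} {μ L : ℝ}

noncomputable def sagaGrad (g : ι → E → ℝ) (x : E) (y : ι → E) (j : ι) : E :=
  gradient (g j) x - gradient (g j) (y j) + (Fintype.card ι : ℝ)⁻¹ • ∑ k, gradient (g k) (y k)

theorem sagaGrad_sub_mean (x xs : E) (y : ι → E) (j : ι) :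
    sagaGrad g x y j - (Fintype.card ι : ℝ)⁻¹ • ∑ k, gradient (g k) xs =
      (gradient (g j) x - gradient (g j) xs) -
        ((gradient (g j) (y j) - gradient (g j) xs) -
          (Fintype.card ι : ℝ)⁻¹ • ∑ k, (gradient (g k) (y k) - gradient (g k) xs)) := by
  rw [sagaGrad, sum_sub_distrib, smul_sub]
  abel

variable [Nonempty ι]

theorem expect_inner_sagaGrad_sub_mean (a x xs : E) (y : ι → E) :
    𝔼 j, ⟪a, sagaGrad g x y j - (Fintype.card ι : ℝ)⁻¹ • ∑ k, gradient (g k) xs⟫ =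
      𝔼 j, ⟪a, gradient (g j) x - gradient (g j) xs⟫ := by
  set B : ι → E := fun j => gradient (g j) (y j) - gradient (g j) xs
  calc 𝔼 j, ⟪a, sagaGrad g x y j - (Fintype.card ι : ℝ)⁻¹ • ∑ k, gradient (g k) xs⟫
      = 𝔼 j, (⟪a, gradient (g j) x - gradient (g j) xs⟫ -
          ⟪a, B j - (Fintype.card ι : ℝ)⁻¹ • ∑ k, B k⟫) := by
        simp only [sagaGrad_sub_mean, inner_sub_right (𝕜 := ℝ) a (gradient _ x - _), B]
    _ = _ := by rw [expect_sub_distrib, expect_inner_sub_mean, sub_zero]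

theorem mul_expect_bregman_le_expect_inner_sagaGrad (hsc : ∀ j, StrongConvexOn Set.univ μ (g j))
    (hdiff : ∀ j, Differentiable ℝ (g j)) (hμ : 0 ≤ μ) (hL : 0 < L)
    (hlip : ∀ j a b, ‖gradient (g j) a - gradient (g j) b‖ ≤ L * ‖a - b‖) (x xs : E) (y : ι → E) :
    2 * μ / L * 𝔼 j, bregman (g j) x xs ≤
      𝔼 j, ⟪x - xs, sagaGrad g x y j - (Fintype.card ι : ℝ)⁻¹ • ∑ k, gradient (g k) xs⟫ := by
  rw [expect_inner_sagaGrad_sub_mean]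
  have hup : 𝔼 j, bregman (g j) x xs ≤ L / 2 * ‖x - xs‖ ^ 2 :=
    expect_le univ_nonempty fun j _ => bregman_le_of_lipschitz_gradient (hdiff j) (hlip j) x xs
  have hlow : μ * ‖x - xs‖ ^ 2 ≤ 𝔼 j, ⟪x - xs, gradient (g j) x - gradient (g j) xs⟫ :=
    le_expect univ_nonempty fun j _ => by
      rw [real_inner_comm]
      exact (hsc j).mul_norm_sq_le_inner_gradient_sub (hdiff j) x xs
  calc 2 * μ / L * 𝔼 j, bregman (g j) x xs ≤ 2 * μ / L * (L / 2 * ‖x - xs‖ ^ 2) := by gcongr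
    _ = μ * ‖x - xs‖ ^ 2 := by field_simp
    _ ≤ _ := hlow

theorem expect_norm_sagaGrad_sub_mean_sq_le (hconv : ∀ j, ConvexOn ℝ Set.univ (g j))
    (hdiff : ∀ j, Differentiable ℝ (g j)) (hL : 0 < L)
    (hlip : ∀ j a b, ‖gradient (g j) a - gradient (g j) b‖ ≤ L * ‖a - b‖) (x xs : E) (y : ι → E) :
    𝔼 j, ‖sagaGrad g x y j - (Fintype.card ι : ℝ)⁻¹ • ∑ k, gradient (g k) xs‖ ^ 2 ≤
      4 * L * 𝔼 j, bregman (g j) x xs + 4 * L * 𝔼 j, bregman (g j) (y j) xs := by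
  set B : ι → E := fun j => gradient (g j) (y j) - gradient (g j) xs
  have hcoco : ∀ j a, ‖gradient (g j) a - gradient (g j) xs‖ ^ 2 ≤ 2 * L * bregman (g j) a xs :=
    fun j a => (hconv j).norm_sub_gradient_sq_le_bregman (hdiff j) hL (hlip j) a xs
  calc 𝔼 j, ‖sagaGrad g x y j - (Fintype.card ι : ℝ)⁻¹ • ∑ k, gradient (g k) xs‖ ^ 2
      ≤ 𝔼 j, (2 * ‖gradient (g j) x - gradient (g j) xs‖ ^ 2 +
          2 * ‖B j - (Fintype.card ι : ℝ)⁻¹ • ∑ k, B k‖ ^ 2) :=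
        expect_le_expect fun j _ => by rw [sagaGrad_sub_mean]; exact norm_sub_sq_le_two_mul _ _
    _ ≤ 2 * 𝔼 j, ‖gradient (g j) x - gradient (g j) xs‖ ^ 2 + 2 * 𝔼 j, ‖B j‖ ^ 2 := by
        rw [expect_add_distrib, ← mul_expect, ← mul_expect]
        linarith [expect_norm_sub_mean_sq_le B]
    _ ≤ 2 * 𝔼 j, 2 * L * bregman (g j) x xs + 2 * 𝔼 j, 2 * L * bregman (g j) (y j) xs := by
        gcongr with j
        · exact hcoco j x
        · exact hcoco j (y j)
    _ = _ := by rw [← mul_expect, ← mul_expect]; ring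

end SAGA

theorem LinearMap.IsSymmetric.inner_sub_map_sub {E : Type*} [NormedAddCommGroup E]
    [InnerProductSpace ℝ E] {T : Module.End ℝ E} (hT : T.IsSymmetric) (a b : E) :
    ⟪a - b, T (a - b)⟫ = ⟪a, T a⟫ - 2 * ⟪a, T b⟫ + ⟪b, T b⟫ := by
  rw [map_sub, inner_sub_left, inner_sub_right, inner_sub_right, ← hT b a, real_inner_comm a]
  ring

theorem primalDual_step_identity {E : Type*} [NormedAddCommGroup E] [InnerProductSpace ℝ E]
    {T Z S : Module.End ℝ E} (hT : T.IsSymmetric) (hS : S.IsSymmetric) (hS2 : S * S = T - Z)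
    {x v xs vs e xp vp : E} (hTxs : T xs = xs) (hZxs : Z xs = xs)
    (hxp : xp = T x - S (v - vs) - e) (hvp : vp = v + S xp) :
    ⟪xp - xs, T (xp - xs)⟫ + ‖vp - vs‖ ^ 2 =
      ⟪x - xs, T (x - xs)⟫ + ‖v - vs‖ ^ 2
        - 2 * ⟪xp - xs, ((1 : Module.End ℝ E) + Z - (2 : ℝ) • T) (xp - xs)⟫
        - ⟪xp - x, T (xp - x)⟫ - ‖vp - v‖ ^ 2 - 2 * ⟪xp - xs, e⟫ := by
  have hSS : ∀ w, S (S w) = T w - Z w := fun w => by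
    rw [← Module.End.mul_apply, hS2, LinearMap.sub_apply]
  have hSxs : S xs = 0 := by
    rw [← inner_self_eq_zero (𝕜 := ℝ), hS, hSS, hTxs, hZxs, sub_self, inner_zero_right]
  set d := xp - xs
  have hSd : S d = vp - v := by rw [map_sub, hSxs, sub_zero, hvp, add_sub_cancel_left]
  have hkey : e + S (vp - vs) = T (x - xp) - ((1 : Module.End ℝ E) + Z - (2 : ℝ) • T) d := by
    have he : e = T x - S (v - vs) - xp := by rw [hxp]; abel
    rw [he, hvp]
    simp only [d, map_sub, map_add, hSS, LinearMap.add_apply, LinearMap.sub_apply,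
      LinearMap.smul_apply, Module.End.one_apply, hTxs, hZxs]
    module
  have hinner := congrArg (⟪d, ·⟫) hkey
  simp only [inner_add_right, inner_sub_right] at hinner
  rw [← hS, hSd] at hinner
  have hv : ‖v - vs‖ ^ 2 = ‖vp - v‖ ^ 2 - 2 * ⟪vp - v, vp - vs⟫ + ‖vp - vs‖ ^ 2 := by
    rw [← norm_sub_sq_real, sub_sub_sub_cancel_left, norm_sub_rev]
  have hx := hT.inner_sub_map_sub d (xp - x)
  rw [show d - (xp - x) = x - xs by simp only [d]; abel] at hx
  have hxx : T (x - xp) = -T (xp - x) := by rw [← map_neg, neg_sub]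
  rw [hxx, inner_neg_right] at hinner
  linarith

section Blocks

variable {N p : ℕ}

noncomputable def blockOp :
    Matrix (Fin N) (Fin N) ℝ →ₐ[ℝ] Module.End ℝ (PiLp 2 fun _ : Fin N => Evec p) where
  toFun M :=
    { toFun := fun a => WithLp.toLp 2 fun n => ∑ m, M n m • a m
      map_add' := fun a b => by ext1; simp [smul_add, sum_add_distrib]
      map_smul' := fun c a => by ext1; simp [smul_sum, smul_comm c] }
  map_one' := by ext a n; simp [Matrix.one_apply]
  map_mul' M M' := by
    ext a n
    simp only [LinearMap.coe_mk, AddHom.coe_mk, Module.End.mul_apply, WithLp.ofLp_sum,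
      WithLp.ofLp_smul, Finset.sum_apply, Pi.smul_apply, smul_eq_mul, Matrix.mul_apply, sum_smul,
      smul_sum, smul_smul]
    exact sum_comm
  map_zero' := by ext a n; simp
  map_add' M M' := by ext a n; simp [add_smul, sum_add_distrib]
  commutes' r := by ext a n; simp [Matrix.algebraMap_eq_diagonal, Matrix.diagonal_apply]

theorem blockOp_apply (M : Matrix (Fin N) (Fin N) ℝ) (a : PiLp 2 fun _ : Fin N => Evec p)
    (n : Fin N) : blockOp M a n = ∑ m, M n m • a m :=
  rfl

theorem blockOp_isSymmetric {M : Matrix (Fin N) (Fin N) ℝ} (hM : M.IsSymm) :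
    (blockOp M : Module.End ℝ (PiLp 2 fun _ : Fin N => Evec p)).IsSymmetric := fun a b => by
  rw [PiLp.inner_apply, PiLp.inner_apply]
  simp only [blockOp_apply, sum_inner, inner_sum, real_inner_smul_left, real_inner_smul_right]
  rw [sum_comm]
  exact sum_congr rfl fun n _ => sum_congr rfl fun m _ => by rw [hM.apply]

theorem blockOp_const {M : Matrix (Fin N) (Fin N) ℝ} (hM : M.mulVec (fun _ => 1) = fun _ => 1)
    (w : Evec p) : blockOp M (WithLp.toLp 2 fun _ : Fin N => w) = WithLp.toLp 2 fun _ => w := by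
  ext1 n
  have hrow : ∑ m, M n m = 1 := by simpa [Matrix.mulVec, dotProduct] using congrFun hM n
  simp [blockOp_apply, ← sum_smul, hrow]

theorem quadForm_eq_inner (M : Matrix (Fin N) (Fin N) ℝ) (a : Fin N → Evec p) :
    quadForm M a = ⟪WithLp.toLp 2 a, blockOp M (WithLp.toLp 2 a)⟫ := by
  rw [PiLp.inner_apply]
  rfl

theorem sqnormB_eq_norm_sq (a : Fin N → Evec p) : sqnormB a = ‖WithLp.toLp 2 a‖ ^ 2 := by
  simp [sqnormB, PiLp.norm_sq_eq_of_L2]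

theorem quadForm_sub_smul_one (M : Matrix (Fin N) (Fin N) ℝ) (c : ℝ)
    (a : Fin N → Evec p) : quadForm (M - c • 1) a = quadForm M a - c * sqnormB a := by
  rw [quadForm_eq_inner, quadForm_eq_inner, sqnormB_eq_norm_sq, map_sub, map_smul, map_one,
    LinearMap.sub_apply, inner_sub_right, LinearMap.smul_apply, Module.End.one_apply,
    real_inner_smul_right, real_inner_self_eq_norm_sq]

end Blocks

theorem quadForm_add_sqnormB_step_eq {N p : ℕ} {W Wt Us : Matrix (Fin N) (Fin N) ℝ}
    (hWt : Wt.IsSymm) (hUs : Us.IsSymm) (hUs2 : Us * Us = Wt - W)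
    (hW1 : W.mulVec (fun _ => 1) = fun _ => 1) (hWt1 : Wt.mulVec (fun _ => 1) = fun _ => 1)
    {x v vstar xp vp e : Fin N → Evec p} {xstar : Evec p}
    (hxp : ∀ n, xp n = ∑ m, Wt n m • x m - ∑ m, Us n m • (v m - vstar m) - e n)
    (hvp : ∀ n, vp n = v n + ∑ m, Us n m • xp m) :
    quadForm Wt (fun n => xp n - xstar) + sqnormB (fun n => vp n - vstar n) =
      quadForm Wt (fun n => x n - xstar) + sqnormB (fun n => v n - vstar n)
        - 2 * quadForm (1 + W - (2 : ℝ) • Wt) (fun n => xp n - xstar)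
        - quadForm Wt (fun n => xp n - x n) - sqnormB (fun n => vp n - v n)
        - 2 * ∑ n, ⟪xp n - xstar, e n⟫ := by
  have h := primalDual_step_identity (blockOp_isSymmetric (p := p) hWt) (blockOp_isSymmetric hUs)
    (by rw [← map_mul, hUs2, map_sub]) (blockOp_const hWt1 xstar) (blockOp_const hW1 xstar)
    (x := WithLp.toLp 2 x) (v := WithLp.toLp 2 v) (vs := WithLp.toLp 2 vstar)
    (e := WithLp.toLp 2 e) (xp := WithLp.toLp 2 xp) (vp := WithLp.toLp 2 vp)
    (by ext1 n; simp [hxp, blockOp_apply, smul_sub, sum_sub_distrib])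
    (by ext1 n; simp [hvp, blockOp_apply])
  have he : ∑ n, ⟪xp n - xstar, e n⟫ =
      ⟪WithLp.toLp 2 xp - WithLp.toLp 2 (fun _ : Fin N => xstar), WithLp.toLp 2 e⟫ := by
    rw [PiLp.inner_apply]
    rfl
  rw [he]
  simp only [quadForm_eq_inner, sqnormB_eq_norm_sq]
  rw [map_sub, map_add, map_one, map_smul]
  -- `WithLp.toLp 2 (fun n => a n - b n)` and `WithLp.toLp 2 a - WithLp.toLp 2 b` agree by `rfl`
  exact h

theorem quadForm_add_sqnormB_step_le {N p : ℕ} {W Wt Us : Matrix (Fin N) (Fin N) ℝ}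
    (hWt : Wt.IsSymm) (hUs : Us.IsSymm) (hUs2 : Us * Us = Wt - W)
    (hW1 : W.mulVec (fun _ => 1) = fun _ => 1) (hWt1 : Wt.mulVec (fun _ => 1) = fun _ => 1)
    {α η : ℝ} (hα : 0 < α) (hη : 0 < η) {x v vstar xp vp g gstar : Fin N → Evec p}
    {xstar : Evec p} (hvstar : ∀ n, α • gstar n + ∑ m, Us n m • vstar m = 0)
    (hxp : ∀ n, xp n = x n - α • g n - (x n - ∑ m, Wt n m • x m) - ∑ m, Us n m • v m)
    (hvp : ∀ n, vp n = v n + ∑ m, Us n m • xp m) :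
    quadForm Wt (fun n => xp n - xstar) + sqnormB (fun n => vp n - vstar n)
      ≤ (quadForm Wt (fun n => x n - xstar) + sqnormB (fun n => v n - vstar n))
        - 2 * quadForm (1 + W - (2 : ℝ) • Wt) (fun n => xp n - xstar)
        - quadForm (Wt - (2 * α * η) • 1) (fun n => xp n - x n)
        - sqnormB (fun n => vp n - v n)
        + α / (2 * η) * ∑ n, ‖g n - gstar n‖ ^ 2
        - 2 * α * ∑ n, ⟪x n - xstar, g n - gstar n⟫ := by
  have hid := quadForm_add_sqnormB_step_eq hWt hUs hUs2 hW1 hWt1 (x := x) (v := v) (vstar := vstar)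
    (xstar := xstar) (e := fun n => α • (g n - gstar n))
    (fun n => by
      rw [hxp n]
      simp only [smul_sub, sum_sub_distrib]
      linear_combination (norm := module) -hvstar n) hvp
  have hsplit : ∑ n, ⟪xp n - xstar, α • (g n - gstar n)⟫ =
      α * ∑ n, ⟪xp n - x n, g n - gstar n⟫ + α * ∑ n, ⟪x n - xstar, g n - gstar n⟫ := by
    simp only [real_inner_smul_right, ← mul_add, ← mul_sum, ← sum_add_distrib, ← inner_add_left,
      sub_add_sub_cancel]
  have hyoung := sum_le_sum fun n (_ : n ∈ univ) => neg_two_inner_le hη (xp n - x n) (g n - gstar n)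
  rw [sum_neg_distrib, ← mul_sum, sum_add_distrib, ← mul_sum, ← sum_div] at hyoung
  rw [quadForm_sub_smul_one, hid, hsplit]
  simp only [sqnormB] at hyoung ⊢
  have hscaled := mul_le_mul_of_nonneg_left hyoung hα.le
  have hdiv : α * ((∑ n, ‖g n - gstar n‖ ^ 2) / (2 * η)) =
      α / (2 * η) * ∑ n, ‖g n - gstar n‖ ^ 2 := by ring
  linarith

section LocalObjectives

variable {N p : ℕ} {q : Fin N → ℕ} {f : (n : Fin N) → Fin (q n) → Evec p → ℝ}

theorem expect_eq_inv_prod_mul_sum (F : ((n : Fin N) → Fin (q n)) → ℝ) :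
    𝔼 i, F i = (∏ n, (q n : ℝ))⁻¹ * ∑ i, F i := by
  simp [expect_eq_inv_card_mul_sum, Fintype.card_pi]

theorem gradient_locf (hdiff : ∀ n j, Differentiable ℝ (f n j)) (n : Fin N) (w : Evec p) :
    gradient (locf f n) w = (q n : ℝ)⁻¹ • ∑ j, gradient (f n j) w :=
  (hasGradientAt_const_mul_sum_s12 univ _ fun j _ => (hdiff n j w).hasGradientAt).gradient

theorem hatg_sub_gradient_locf (hdiff : ∀ n j, Differentiable ℝ (f n j))
    (x : Fin N → Evec p) (y : (n : Fin N) → Fin (q n) → Evec p) (xstar : Evec p) (n : Fin N)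
    (j : Fin (q n)) :
    hatg f x y n j - gradient (locf f n) xstar =
      sagaGrad (f n) (x n) (y n) j -
        (Fintype.card (Fin (q n)) : ℝ)⁻¹ • ∑ k, gradient (f n k) xstar := by
  rw [gradient_locf hdiff, hatg, sagaGrad, Fintype.card_fin]

theorem ptbl_eq_sum_expect_bregman (xstar : Evec p) (y : (n : Fin N) → Fin (q n) → Evec p) :
    ptbl f xstar y = ∑ n, 𝔼 j, bregman (f n j) (y n j) xstar := by
  simp [ptbl, bregman, expect_eq_inv_card_mul_sum]

theorem optgap_eq_sum_expect_bregman (hdiff : ∀ n j, Differentiable ℝ (f n j))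
    (xstar : Evec p) (x : Fin N → Evec p) :
    optgap f xstar x = ∑ n, 𝔼 j, bregman (f n j) (x n) xstar := by
  refine sum_congr rfl fun n _ => ?_
  simp only [locf, gradient_locf hdiff, bregman, expect_eq_inv_card_mul_sum, Fintype.card_fin,
    real_inner_smul_left, sum_inner, sum_sub_distrib]
  ring

theorem ptbl_nonneg (hconv : ∀ n j, ConvexOn ℝ Set.univ (f n j))
    (hdiff : ∀ n j, Differentiable ℝ (f n j)) (xstar : Evec p)
    (y : (n : Fin N) → Fin (q n) → Evec p) : 0 ≤ ptbl f xstar y := by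
  rw [ptbl_eq_sum_expect_bregman]
  exact sum_nonneg fun n _ => expect_nonneg fun j _ => (hconv n j).bregman_nonneg (hdiff n j _) _

theorem optgap_nonneg (hconv : ∀ n j, ConvexOn ℝ Set.univ (f n j))
    (hdiff : ∀ n j, Differentiable ℝ (f n j)) (xstar : Evec p) (x : Fin N → Evec p) :
    0 ≤ optgap f xstar x := by
  rw [optgap_eq_sum_expect_bregman hdiff]
  exact sum_nonneg fun n _ => expect_nonneg fun j _ => (hconv n j).bregman_nonneg (hdiff n j _) _

variable {μ L : ℝ}

theorem expect_sum_norm_hatg_sub_sq_le (hq : ∀ n, 0 < q n)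
    (hconv : ∀ n j, ConvexOn ℝ Set.univ (f n j)) (hdiff : ∀ n j, Differentiable ℝ (f n j))
    (hL : 0 < L) (hlip : ∀ n j a b, ‖gradient (f n j) a - gradient (f n j) b‖ ≤ L * ‖a - b‖)
    (x : Fin N → Evec p) (y : (n : Fin N) → Fin (q n) → Evec p) (xstar : Evec p) :
    𝔼 i : (n : Fin N) → Fin (q n), ∑ n, ‖hatg f x y n (i n) - gradient (locf f n) xstar‖ ^ 2
      ≤ 4 * L * optgap f xstar x + 4 * L * ptbl f xstar y := by
  have : ∀ n, Nonempty (Fin (q n)) := fun n => ⟨⟨0, hq n⟩⟩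
  simp only [hatg_sub_gradient_locf hdiff, optgap_eq_sum_expect_bregman hdiff,
    ptbl_eq_sum_expect_bregman, mul_sum, ← sum_add_distrib]
  rw [expect_pi_sum_eval (fun n j => ‖sagaGrad (f n) (x n) (y n) j -
    (Fintype.card (Fin (q n)) : ℝ)⁻¹ • ∑ k, gradient (f n k) xstar‖ ^ 2)]
  exact sum_le_sum fun n _ =>
    expect_norm_sagaGrad_sub_mean_sq_le (hconv n) (hdiff n) hL (hlip n) (x n) xstar (y n)

theorem mul_optgap_le_expect_sum_inner_hatg (hq : ∀ n, 0 < q n)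
    (hsc : ∀ n j, StrongConvexOn Set.univ μ (f n j)) (hdiff : ∀ n j, Differentiable ℝ (f n j))
    (hμ : 0 ≤ μ) (hL : 0 < L)
    (hlip : ∀ n j a b, ‖gradient (f n j) a - gradient (f n j) b‖ ≤ L * ‖a - b‖)
    (x : Fin N → Evec p) (y : (n : Fin N) → Fin (q n) → Evec p) (xstar : Evec p) :
    2 * μ / L * optgap f xstar x ≤
      𝔼 i : (n : Fin N) → Fin (q n),
        ∑ n, ⟪x n - xstar, hatg f x y n (i n) - gradient (locf f n) xstar⟫ := by
  have : ∀ n, Nonempty (Fin (q n)) := fun n => ⟨⟨0, hq n⟩⟩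
  simp only [hatg_sub_gradient_locf hdiff, optgap_eq_sum_expect_bregman hdiff, mul_sum]
  rw [expect_pi_sum_eval (fun n j => ⟪x n - xstar, sagaGrad (f n) (x n) (y n) j -
    (Fintype.card (Fin (q n)) : ℝ)⁻¹ • ∑ k, gradient (f n k) xstar⟫)]
  exact sum_le_sum fun n _ => mul_expect_bregman_le_expect_inner_sagaGrad (hsc n) (hdiff n)
    hμ hL (hlip n) (x n) xstar (y n)

theorem expect_hatg_terms_le (hq : ∀ n, 0 < q n)
    (hsc : ∀ n j, StrongConvexOn Set.univ μ (f n j)) (hdiff : ∀ n j, Differentiable ℝ (f n j))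
    (hμ : 0 ≤ μ) (hμL : μ ≤ L) (hL : 0 < L)
    (hlip : ∀ n j a b, ‖gradient (f n j) a - gradient (f n j) b‖ ≤ L * ‖a - b‖)
    {α η : ℝ} (hα : 0 < α) (hη : 0 < η)
    (x : Fin N → Evec p) (y : (n : Fin N) → Fin (q n) → Evec p) (xstar : Evec p) :
    α / (2 * η) *
        𝔼 i : (n : Fin N) → Fin (q n), ∑ n, ‖hatg f x y n (i n) - gradient (locf f n) xstar‖ ^ 2
      - 2 * α * 𝔼 i : (n : Fin N) → Fin (q n),
          ∑ n, ⟪x n - xstar, hatg f x y n (i n) - gradient (locf f n) xstar⟫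
      ≤ 4 * α * L / η * ptbl f xstar y
        - (4 * α * μ / L - 2 * α * (2 * L - μ) / η) * optgap f xstar x := by
  have hconv : ∀ n j, ConvexOn ℝ Set.univ (f n j) :=
    fun n j => strongConvexOn_zero.1 ((hsc n j).mono hμ)
  have hvar := mul_le_mul_of_nonneg_left
    (expect_sum_norm_hatg_sub_sq_le hq hconv hdiff hL hlip x y xstar)
    (by positivity : 0 ≤ α / (2 * η))
  have hmean := mul_le_mul_of_nonneg_left
    (mul_optgap_le_expect_sum_inner_hatg hq hsc hdiff hμ hL hlip x y xstar)
    (by positivity : 0 ≤ 2 * α)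
  -- `L ≤ 2L - μ` absorbs the variance term into the optimality gap
  have hD : 2 * α * L / η * optgap f xstar x ≤ 2 * α * (2 * L - μ) / η * optgap f xstar x :=
    mul_le_mul_of_nonneg_right (by gcongr; linarith) (optgap_nonneg hconv hdiff xstar x)
  have hP : 2 * α * L / η * ptbl f xstar y ≤ 4 * α * L / η * ptbl f xstar y :=
    mul_le_mul_of_nonneg_right (by gcongr; linarith) (ptbl_nonneg hconv hdiff xstar y)
  have hexpand : α / (2 * η) * (4 * L * optgap f xstar x + 4 * L * ptbl f xstar y) =
      2 * α * L / η * optgap f xstar x + 2 * α * L / η * ptbl f xstar y := by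
    field_simp
    ring
  have hμterm : 2 * α * (2 * μ / L * optgap f xstar x) = 4 * α * μ / L * optgap f xstar x := by
    ring
  linarith

end LocalObjectives

theorem dsa_lemma3_descent_general
    {N p : ℕ} {q : Fin N → ℕ} (hq : ∀ n, 0 < q n)
    (μ L : ℝ) (hμ : 0 < μ) (hμL : μ ≤ L)
    (f : (n : Fin N) → Fin (q n) → Evec p → ℝ)
    (hdiff : ∀ n i, Differentiable ℝ (f n i))
    (hsc : ∀ n i, StrongConvexOn Set.univ μ (f n i))
    (hlip : ∀ n i a b, ‖gradient (f n i) a - gradient (f n i) b‖ ≤ L * ‖a - b‖)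
    (W Wt Us : Matrix (Fin N) (Fin N) ℝ)
    (hWtsym : Wt.IsSymm)
    (hnullW : ∀ v : Fin N → ℝ,
      ((1 : Matrix (Fin N) (Fin N) ℝ) - W).mulVec v = 0 ↔ ∃ c : ℝ, v = fun _ => c)
    (hnullWt : ((1 : Matrix (Fin N) (Fin N) ℝ) - Wt).mulVec (fun _ => (1:ℝ)) = 0)
    (hUs : Us.PosSemidef) (hUs2 : Us * Us = Wt - W)
    (α η : ℝ) (hα : 0 < α) (hη : 0 < η)
    (xstar : Evec p)
    (vstar : Fin N → Evec p)
    (hvstar : ∀ n, α • gradient (locf f n) xstar + ∑ m, Us n m • vstar m = 0)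
    (x v : Fin N → Evec p)
    (y : (n : Fin N) → Fin (q n) → Evec p)
    (xp vp : ((n : Fin N) → Fin (q n)) → Fin N → Evec p)
    (hxp : ∀ i n, xp i n = x n - α • hatg f x y n (i n)
        - (x n - ∑ m, Wt n m • x m) - ∑ m, Us n m • v m)
    (hvp : ∀ i n, vp i n = v n + ∑ m, Us n m • xp i m) :
    (∏ n, (q n : ℝ))⁻¹ * ∑ i : (n : Fin N) → Fin (q n),
        (quadForm Wt (fun n => xp i n - xstar) + sqnormB (fun n => vp i n - vstar n))
      ≤ (quadForm Wt (fun n => x n - xstar) + sqnormB (fun n => v n - vstar n))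
        - 2 * ((∏ n, (q n : ℝ))⁻¹ * ∑ i : (n : Fin N) → Fin (q n),
            quadForm ((1 : Matrix (Fin N) (Fin N) ℝ) + W - (2:ℝ) • Wt)
              (fun n => xp i n - xstar))
        + (4 * α * L / η) * ptbl f xstar y
        - (∏ n, (q n : ℝ))⁻¹ * ∑ i : (n : Fin N) → Fin (q n),
            quadForm (Wt - (2 * α * η) • (1 : Matrix (Fin N) (Fin N) ℝ))
              (fun n => xp i n - x n)
        - (∏ n, (q n : ℝ))⁻¹ * ∑ i : (n : Fin N) → Fin (q n),
            sqnormB (fun n => vp i n - v n)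
        - (4 * α * μ / L - 2 * α * (2 * L - μ) / η) * optgap f xstar x := by
  have hW1 : W.mulVec (fun _ => 1) = fun _ => 1 := by
    have h := (hnullW _).2 ⟨1, rfl⟩
    rwa [Matrix.sub_mulVec, Matrix.one_mulVec, sub_eq_zero, eq_comm] at h
  have hWt1 : Wt.mulVec (fun _ => 1) = fun _ => 1 := by
    rwa [Matrix.sub_mulVec, Matrix.one_mulVec, sub_eq_zero, eq_comm] at hnullWt
  have hstep := fun i => quadForm_add_sqnormB_step_le hWtsym
    (Matrix.isHermitian_iff_isSymm.1 hUs.1) hUs2 hW1 hWt1 hα hη (xstar := xstar) hvstar (hxp i)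
    (hvp i)
  have : ∀ n, Nonempty (Fin (q n)) := fun n => ⟨⟨0, hq n⟩⟩
  have havg := expect_le_expect fun i (_ : i ∈ univ) => hstep i
  simp only [expect_add_distrib, expect_sub_distrib, ← mul_expect, Fintype.expect_const] at havg
  simp only [← expect_eq_inv_prod_mul_sum, expect_add_distrib]
  linarith [expect_hatg_terms_le hq hsc hdiff hμ.le hμL (hμ.trans_le hμL) hlip hα hη x y xstar]

/-- **Lemma 3 of the DSA paper.**  All matrices act blockwise (they are the
`N × N` factors of the extended matrices `Z = W ⊗ I`, `Z̃ = W̃ ⊗ I`,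
`U = (Z̃ − Z)^{1/2} = Us ⊗ I`).  Under Assumption 1 on the weight matrices and
strong convexity / Lipschitz-gradient assumptions on the local instantaneous
functions, the DSA primal-dual update
`x⁺(i) = x − α ĝ(i) − (I − Z̃)x − U v`, `v⁺(i) = v + U x⁺(i)` satisfies, for any
`η > 0`,
`E_i ‖u⁺(i) − u*‖²_G ≤ ‖u − u*‖²_G − 2 E_i ‖x⁺(i) − x*‖²_{I+Z−2Z̃} + (4αL/η) p(y)
  − E_i ‖x⁺(i) − x‖²_{Z̃−2αηI} − E_i ‖v⁺(i) − v‖² − (4αμ/L − 2α(2L−μ)/η) (f(x) − f(x*) − ⟨∇f(x*), x−x*⟩)`,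
where `‖u − u*‖²_G = ‖x − x*‖²_{Z̃} + ‖v − v*‖²` and `E_i` is the uniform average
over joint index choices. -/
theorem dsa_lemma3_descent
    {N p : ℕ} {q : Fin N → ℕ} (hq : ∀ n, 0 < q n)
    (μ L : ℝ) (hμ : 0 < μ) (hμL : μ ≤ L)
    (f : (n : Fin N) → Fin (q n) → Evec p → ℝ)
    (hdiff : ∀ n i, Differentiable ℝ (f n i))
    (hsc : ∀ n i, StrongConvexOn Set.univ μ (f n i))
    (hlip : ∀ n i a b, ‖gradient (f n i) a - gradient (f n i) b‖ ≤ L * ‖a - b‖)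
    (W Wt Us : Matrix (Fin N) (Fin N) ℝ)
    (hWsym : W.IsSymm) (hWtsym : Wt.IsSymm)
    (hnullW : ∀ v : Fin N → ℝ,
      ((1 : Matrix (Fin N) (Fin N) ℝ) - W).mulVec v = 0 ↔ ∃ c : ℝ, v = fun _ => c)
    (hnulldiff : ∀ v : Fin N → ℝ, (Wt - W).mulVec v = 0 ↔ ∃ c : ℝ, v = fun _ => c)
    (hnullWt : ((1 : Matrix (Fin N) (Fin N) ℝ) - Wt).mulVec (fun _ => (1:ℝ)) = 0)
    (hord1 : (Wt - W).PosSemidef)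
    (hord2 : ((1 : Matrix (Fin N) (Fin N) ℝ) + W - (2:ℝ) • Wt).PosSemidef)
    (hWtpos : Wt.PosDef)
    (hUs : Us.PosSemidef) (hUs2 : Us * Us = Wt - W)
    (α η : ℝ) (hα : 0 < α) (hη : 0 < η)
    (xstar : Evec p)
    (hxstar : ∀ w, ∑ n, locf f n xstar ≤ ∑ n, locf f n w)
    (vstar : Fin N → Evec p)
    (hvstar : ∀ n, α • gradient (locf f n) xstar + ∑ m, Us n m • vstar m = 0)
    (x v : Fin N → Evec p)
    (y : (n : Fin N) → Fin (q n) → Evec p)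
    (xp vp : ((n : Fin N) → Fin (q n)) → Fin N → Evec p)
    (hxp : ∀ i n, xp i n = x n - α • hatg f x y n (i n)
        - (x n - ∑ m, Wt n m • x m) - ∑ m, Us n m • v m)
    (hvp : ∀ i n, vp i n = v n + ∑ m, Us n m • xp i m) :
    (∏ n, (q n : ℝ))⁻¹ * ∑ i : (n : Fin N) → Fin (q n),
        (quadForm Wt (fun n => xp i n - xstar) + sqnormB (fun n => vp i n - vstar n))
      ≤ (quadForm Wt (fun n => x n - xstar) + sqnormB (fun n => v n - vstar n))
        - 2 * ((∏ n, (q n : ℝ))⁻¹ * ∑ i : (n : Fin N) → Fin (q n),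
            quadForm ((1 : Matrix (Fin N) (Fin N) ℝ) + W - (2:ℝ) • Wt)
              (fun n => xp i n - xstar))
        + (4 * α * L / η) * ptbl f xstar y
        - (∏ n, (q n : ℝ))⁻¹ * ∑ i : (n : Fin N) → Fin (q n),
            quadForm (Wt - (2 * α * η) • (1 : Matrix (Fin N) (Fin N) ℝ))
              (fun n => xp i n - x n)
        - (∏ n, (q n : ℝ))⁻¹ * ∑ i : (n : Fin N) → Fin (q n),
            sqnormB (fun n => vp i n - v n)
        - (4 * α * μ / L - 2 * α * (2 * L - μ) / η) * optgap f xstar x :=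
  dsa_lemma3_descent_general hq μ L hμ hμL f hdiff hsc hlip W Wt Us hWtsym hnullW hnullWt hUs hUs2 α
    η hα hη xstar vstar hvstar x v y xp vp hxp hvp
end
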